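/- Let Z = Σ_{i=1}^n z_i with independent z_i ~ Ber(q_i), λ = Σ q_i, and ℓ ≥ λ an integer. Then min(λ, ℓ) - E[min(Z, ℓ)] = Σ_{i=ℓ+1}^n P[Z ≥ i], and for any α ∈ (0,1), this quantity is at most αλ + (6/α)·exp(-α²λ/3). -/

import Mathlib

open Finset Real

/-- Probability of the outcome `z` of `n` independent Bernoulli random variables with
parameters `q i`. -/
noncomputable def berWeight {n : ℕ} (q : Fin n → ℝ) (z : Fin n → Bool) : ℝ :=
  ∏ i, if z i then q i else 1 - q i

/-- Number of successes in outcome `z`. -/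
def count {n : ℕ} (z : Fin n → Bool) : ℕ := ∑ i, if z i then 1 else 0

/-- `Hber q ℓ = E[min(Σᵢ zᵢ, ℓ)]` for independent `zᵢ ~ Ber(q i)`. -/
noncomputable def Hber {n : ℕ} (q : Fin n → ℝ) (ℓ : ℕ) : ℝ :=
  ∑ z : Fin n → Bool, berWeight q z * min ((count z : ℝ)) (ℓ : ℝ)

/-- `Ptail q m = P[Σᵢ zᵢ ≥ m]` for independent `zᵢ ~ Ber(q i)`. -/
noncomputable def Ptail {n : ℕ} (q : Fin n → ℝ) (m : ℕ) : ℝ :=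
  ∑ z ∈ Finset.univ.filter (fun z : Fin n → Bool => m ≤ count z), berWeight q z

/-!
The identity is the layer-cake formula `Z - min(Z, ℓ) = Σ_{ℓ < i ≤ n} 1[Z ≥ i]` together with
`E[Z] = λ`. For the bound, the indices `ℓ < i < (1+α)λ` contribute at most `1` each, so at most
`αλ` in total since `ℓ ≥ λ`. For `i ≥ (1+α)λ`, the Chernoff bound `P[Z ≥ i] ≤ exp((eᵗ - 1)λ - ti)`
at `t = 2α/3`, combined with `eᵗ ≤ 1 + t + 3t²/4`, gives `P[Z ≥ i] ≤ e^{-α²λ/3} e^{-t(i - (1+α)λ)}`;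
this geometric series sums to at most `e^{-α²λ/3} / (1 - e^{-t}) ≤ (2/t) e^{-α²λ/3}`.
-/

def ChernoffBound (lam : ℝ) (p : ℕ → ℝ) : Prop :=
  ∀ t, 0 ≤ t → ∀ i : ℕ, p i ≤ exp ((exp t - 1) * lam - t * i)

section BernoulliSum

variable {n : ℕ}

theorem sum_berWeight_mul_prod (q : Fin n → ℝ) (g : Fin n → Bool → ℝ) :
    ∑ z, berWeight q z * ∏ i, g i (z i) = ∏ i, ((1 - q i) * g i false + q i * g i true) := by
  simp only [berWeight, ← prod_mul_distrib]
  rw [← Fintype.prod_sum (κ := fun _ => Bool) fun i b => (if b then q i else 1 - q i) * g i b]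
  simp [add_comm]

theorem sum_berWeight (q : Fin n → ℝ) : ∑ z, berWeight q z = 1 := by
  simpa using sum_berWeight_mul_prod q fun _ _ => 1

theorem sum_berWeight_mul_ite (q : Fin n → ℝ) (i : Fin n) :
    ∑ z, berWeight q z * (if z i then 1 else 0) = q i := by
  have h := sum_berWeight_mul_prod q fun j b => if j = i then (if b then 1 else 0) else 1
  simp only [prod_ite_eq', mem_univ, if_true] at h
  rw [h, prod_eq_single i (fun j _ hj => by simp [hj]) (by simp)]
  simp

theorem sum_berWeight_mul_count (q : Fin n → ℝ) :
    ∑ z, berWeight q z * (count z : ℝ) = ∑ i, q i := by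
  simp only [count, Nat.cast_sum, Nat.cast_ite, Nat.cast_one, Nat.cast_zero, mul_sum]
  rw [sum_comm]
  exact sum_congr rfl fun i _ => sum_berWeight_mul_ite q i

theorem sum_berWeight_mul_exp_count (q : Fin n → ℝ) (t : ℝ) :
    ∑ z, berWeight q z * exp (t * count z) = ∏ i, (1 - q i + q i * exp t) := by
  have h (z : Fin n → Bool) : exp (t * count z) = ∏ i, if z i then exp t else 1 := by
    simp only [count, Nat.cast_sum, Nat.cast_ite, Nat.cast_one, Nat.cast_zero, mul_sum, exp_sum]
    exact prod_congr rfl fun i _ => by split <;> simp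
  simp only [h, sum_berWeight_mul_prod q fun _ b => if b then exp t else 1]
  simp

theorem count_le (z : Fin n → Bool) : count z ≤ n := by
  simpa [count, sum_boole] using card_filter_le univ (fun i => z i = true)

variable {q : Fin n → ℝ} (hq : ∀ i, q i ∈ Set.Icc (0 : ℝ) 1)
include hq

theorem berWeight_nonneg (z : Fin n → Bool) : 0 ≤ berWeight q z :=
  prod_nonneg fun i _ => by
    obtain ⟨h0, h1⟩ := hq i
    split <;> linarith

theorem Ptail_le_one (m : ℕ) : Ptail q m ≤ 1 :=
  sum_berWeight q ▸ sum_le_sum_of_subset_of_nonneg (filter_subset _ _)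
    fun z _ _ => berWeight_nonneg hq z

theorem Ptail_le_exp_neg_mul_mgf (m : ℕ) {t : ℝ} (ht : 0 ≤ t) :
    Ptail q m ≤ exp (-(t * m)) * ∑ z, berWeight q z * exp (t * count z) := by
  rw [mul_sum]
  refine (sum_le_sum fun z hz => ?_).trans <| sum_le_sum_of_subset_of_nonneg (filter_subset _ _)
    fun z _ _ => by have := berWeight_nonneg hq z; positivity
  have hm : (m : ℝ) ≤ count z := by exact_mod_cast (mem_filter.mp hz).2
  have : 1 ≤ exp (-(t * m)) * exp (t * count z) := by
    rw [← exp_add]; exact one_le_exp (by nlinarith)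
  nlinarith [berWeight_nonneg hq z]

theorem prod_one_sub_add_mul_exp_le (t : ℝ) :
    ∏ i, (1 - q i + q i * exp t) ≤ exp ((exp t - 1) * ∑ i, q i) := by
  rw [mul_sum, exp_sum]
  refine prod_le_prod (fun i _ => ?_) fun i _ => ?_
  · obtain ⟨h0, h1⟩ := hq i
    have := exp_pos t
    nlinarith
  · linarith [add_one_le_exp ((exp t - 1) * q i)]

theorem chernoffBound_Ptail : ChernoffBound (∑ i, q i) (Ptail q) := fun t ht m =>
  calc Ptail q m ≤ exp (-(t * m)) * ∏ i, (1 - q i + q i * exp t) := by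
        rw [← sum_berWeight_mul_exp_count]; exact Ptail_le_exp_neg_mul_mgf hq m ht
    _ ≤ exp (-(t * m)) * exp ((exp t - 1) * ∑ i, q i) :=
        mul_le_mul_of_nonneg_left (prod_one_sub_add_mul_exp_le hq t) (exp_nonneg _)
    _ = exp ((exp t - 1) * ∑ i, q i - t * m) := by rw [← exp_add]; ring_nf

end BernoulliSum

theorem card_filter_Icc_le (ℓ : ℕ) {n c : ℕ} (hc : c ≤ n) :
    #{i ∈ Icc (ℓ + 1) n | i ≤ c} = c - ℓ := by
  have h : {i ∈ Icc (ℓ + 1) n | i ≤ c} = Icc (ℓ + 1) c := by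
    ext i; simp only [mem_filter, mem_Icc]; omega
  rw [h, Nat.card_Icc]
  omega

theorem sum_Icc_Ptail {n : ℕ} (q : Fin n → ℝ) (ℓ : ℕ) :
    ∑ i ∈ Icc (ℓ + 1) n, Ptail q i = ∑ z, berWeight q z * (count z - min (count z : ℝ) ℓ) := by
  simp only [Ptail, sum_filter]
  rw [sum_comm]
  refine sum_congr rfl fun z _ => ?_
  rw [← sum_filter, sum_const, card_filter_Icc_le ℓ (count_le z), nsmul_eq_mul, mul_comm,
    show count z - ℓ = count z - min (count z) ℓ by omega, Nat.cast_sub (min_le_left _ _),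
    Nat.cast_min]

theorem exp_le_one_add_add_sq {t : ℝ} (h0 : 0 ≤ t) (h1 : t ≤ 1) :
    exp t ≤ 1 + t + 3 / 4 * t ^ 2 := by
  have := exp_bound' h0 h1 (n := 2) two_pos
  norm_num [sum_range_succ, Nat.factorial] at this
  nlinarith

theorem exp_neg_le_one_sub_half {t : ℝ} (h0 : 0 ≤ t) (h1 : t ≤ 1) :
    exp (-t) ≤ 1 - t / 2 := by
  rw [exp_neg, inv_le_iff_one_le_mul₀ (exp_pos t)]
  nlinarith [add_one_le_exp t]

theorem card_filter_Icc_cast_lt_le (ℓ n : ℕ) {x : ℝ} (hx : 0 ≤ x) :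
    (#((Icc (ℓ + 1) n).filter fun i : ℕ => (i : ℝ) < x) : ℝ) ≤ max (x - ℓ) 0 := by
  have hsub : (Icc (ℓ + 1) n).filter (fun i : ℕ => (i : ℝ) < x) ⊆ Icc (ℓ + 1) ⌊x⌋₊ :=
      fun i hi => by
    simp only [mem_filter, mem_Icc] at hi ⊢
    exact ⟨hi.1.1, Nat.le_floor hi.2.le⟩
  have hcard := (card_le_card hsub).trans_eq (Nat.card_Icc _ _)
  rcases le_total ℓ ⌊x⌋₊ with h | h
  · refine le_max_of_le_left ?_
    calc (#((Icc (ℓ + 1) n).filter fun i : ℕ => (i : ℝ) < x) : ℝ) ≤ ((⌊x⌋₊ - ℓ : ℕ) : ℝ) := by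
          exact_mod_cast hcard.trans_eq (by omega)
      _ ≤ x - ℓ := by rw [Nat.cast_sub h]; linarith [Nat.floor_le hx]
  · exact le_max_of_le_right (by exact_mod_cast hcard.trans_eq (by omega))

theorem sum_filter_exp_neg_le (S : Finset ℕ) (x : ℝ) {t : ℝ} (ht : 0 < t) :
    ∑ i ∈ S.filter (fun i : ℕ => x ≤ i), exp (-(t * (i - x))) ≤ (1 - exp (-t))⁻¹ := by
  obtain ⟨N, hN⟩ := exists_nat_subset_range S
  set m := ⌈x⌉₊
  have hr : exp (-t) < 1 := exp_lt_one_iff.mpr (neg_lt_zero.mpr ht)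
  have hpow (k : ℕ) : exp (-t) ^ k = exp (-(t * k)) := by rw [← exp_nat_mul]; ring_nf
  calc ∑ i ∈ S.filter (fun i : ℕ => x ≤ i), exp (-(t * (i - x)))
      ≤ ∑ i ∈ S.filter (fun i : ℕ => x ≤ i), exp (t * m) * exp (-t) ^ i :=
        sum_le_sum fun i _ => by rw [hpow, ← exp_add, exp_le_exp]; nlinarith [Nat.le_ceil x]
    _ ≤ ∑ i ∈ Ico m N, exp (t * m) * exp (-t) ^ i := by
        refine sum_le_sum_of_subset_of_nonneg (fun i hi => ?_) fun _ _ _ => by positivity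
        simp only [mem_filter] at hi
        exact mem_Ico.mpr ⟨Nat.ceil_le.mpr hi.2, mem_range.mp (hN hi.1)⟩
    _ ≤ exp (t * m) * (exp (-t) ^ m / (1 - exp (-t))) := by
        rw [← mul_sum]; gcongr; exact geom_sum_Ico_le_of_lt_one (exp_nonneg _) hr
    _ = (1 - exp (-t))⁻¹ := by
        rw [hpow, mul_div_assoc', ← exp_add, add_neg_cancel, exp_zero, one_div]

theorem chernoff_exponent_le {α lam : ℝ} (hα0 : 0 ≤ α) (hα1 : α ≤ 1) (hlam : 0 ≤ lam) (y : ℝ) :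
    (exp (2 * α / 3) - 1) * lam - 2 * α / 3 * y
      ≤ -(α ^ 2 * lam / 3) - 2 * α / 3 * (y - (1 + α) * lam) := by
  have := exp_le_one_add_add_sq (t := 2 * α / 3) (by positivity) (by linarith)
  nlinarith

section ChernoffTail

variable {p : ℕ → ℝ} {lam α : ℝ}

theorem ChernoffBound.sum_upper_tail_le (hp : ChernoffBound lam p) (S : Finset ℕ)
    (hlam : 0 ≤ lam) (hα0 : 0 < α) (hα1 : α ≤ 1) :
    ∑ i ∈ S.filter (fun i : ℕ => (1 + α) * lam ≤ i), p i ≤ 6 / α * exp (-(α ^ 2 * lam / 3)) := by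
  set c := exp (-(α ^ 2 * lam / 3))
  have ht0 : 0 < 2 * α / 3 := by positivity
  calc ∑ i ∈ S.filter (fun i : ℕ => (1 + α) * lam ≤ i), p i
      ≤ ∑ i ∈ S.filter (fun i : ℕ => (1 + α) * lam ≤ i),
          c * exp (-(2 * α / 3 * (i - (1 + α) * lam))) :=
        sum_le_sum fun i _ => (hp _ ht0.le i).trans <| by
          rw [← exp_add, exp_le_exp]; linarith [chernoff_exponent_le hα0.le hα1 hlam i]
    _ ≤ c * (1 - exp (-(2 * α / 3)))⁻¹ := by
        rw [← mul_sum]; gcongr; exact sum_filter_exp_neg_le S _ ht0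
    _ ≤ c * (2 * α / 3 / 2)⁻¹ := by
        gcongr; linarith [exp_neg_le_one_sub_half ht0.le (by linarith)]
    _ ≤ 6 / α * c := by
        rw [mul_comm]; gcongr
        field_simp; norm_num

theorem ChernoffBound.sum_Icc_le (hp : ChernoffBound lam p) (hp1 : ∀ i, p i ≤ 1) {ℓ : ℕ}
    (n : ℕ) (hlam : 0 ≤ lam) (hℓ : lam ≤ ℓ) (hα0 : 0 < α) (hα1 : α ≤ 1) :
    ∑ i ∈ Icc (ℓ + 1) n, p i ≤ α * lam + 6 / α * exp (-(α ^ 2 * lam / 3)) := by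
  rw [← sum_filter_add_sum_filter_not (Icc (ℓ + 1) n) fun i : ℕ => (i : ℝ) < (1 + α) * lam]
  simp only [not_lt]
  refine add_le_add ?_ (hp.sum_upper_tail_le _ hlam hα0 hα1)
  calc _ ≤ (#((Icc (ℓ + 1) n).filter fun i : ℕ => (i : ℝ) < (1 + α) * lam) : ℝ) := by
        simpa using sum_le_sum fun i (_ : i ∈ (Icc (ℓ + 1) n).filter _) => hp1 i
    _ ≤ α * lam :=
        (card_filter_Icc_cast_lt_le ℓ n (by positivity)).trans
          (max_le (by linarith) (by positivity))

end ChernoffTail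

theorem chernoff_upper_tail_general (n : ℕ) (q : Fin n → ℝ) (hq : ∀ i, q i ∈ Set.Icc (0 : ℝ) 1)
    (lam : ℝ) (hlam : lam = ∑ i, q i) (ℓ : ℕ) (hℓlam : lam ≤ (ℓ : ℝ)) :
    min lam (ℓ : ℝ) - Hber q ℓ = ∑ i ∈ Finset.Icc (ℓ + 1) n, Ptail q i ∧
    ∀ α : ℝ, 0 < α → α < 1 →
      min lam (ℓ : ℝ) - Hber q ℓ ≤ α * lam + 6 / α * Real.exp (-(α ^ 2 * lam / 3)) := by
  subst hlam
  have hid : min (∑ i, q i) ℓ - Hber q ℓ = ∑ i ∈ Icc (ℓ + 1) n, Ptail q i := by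
    rw [min_eq_left hℓlam, sum_Icc_Ptail, Hber, ← sum_berWeight_mul_count, ← sum_sub_distrib]
    simp only [mul_sub]
  refine ⟨hid, fun α hα0 hα1 => hid ▸ ?_⟩
  exact (chernoffBound_Ptail hq).sum_Icc_le (Ptail_le_one hq) n
    (sum_nonneg fun i _ => (hq i).1) hℓlam hα0 hα1.le

/-- Let `Z = Σ z_i` with independent `z_i ~ Ber(q_i)`, `λ = Σ q_i`, and `ℓ ≥ λ` a positive
integer. Then `min(λ, ℓ) - E[min(Z, ℓ)] = Σ_{i=ℓ+1}^n P[Z ≥ i]`, and for any `α ∈ (0,1)`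
this quantity is at most `αλ + (6/α)·exp(-α²λ/3)`. -/
theorem chernoff_upper_tail (n : ℕ) (q : Fin n → ℝ) (hq : ∀ i, q i ∈ Set.Icc (0 : ℝ) 1)
    (lam : ℝ) (hlam : lam = ∑ i, q i) (ℓ : ℕ) (hℓ : 1 ≤ ℓ) (hℓlam : lam ≤ (ℓ : ℝ)) :
    min lam (ℓ : ℝ) - Hber q ℓ = ∑ i ∈ Finset.Icc (ℓ + 1) n, Ptail q i ∧
    ∀ α : ℝ, 0 < α → α < 1 →
      min lam (ℓ : ℝ) - Hber q ℓ ≤ α * lam + 6 / α * Real.exp (-(α ^ 2 * lam / 3)) :=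
  chernoff_upper_tail_general n q hq lam hlam ℓ hℓlam
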